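/- arXiv:1911.08727 — 3 statements merged into one kernel-verified Lean document; each statement's English description precedes it below -/
import Mathlib

section
/- For every vector x ∈ ℝ^d and every integer k with 1 ≤ k ≤ d, the Top-k sparsification error satisfies ‖x − TopK(x,k)‖² ≤ (1 − k/d) ‖x‖²; that is, keeping the k coordinates of largest absolute value incurs squared error no larger than the average squared error over all choices of k coordinates to keep. -/
open Finset

/-- `topK k y ∈ ℝ^m` keeps the `k` coordinates of `y` with largest absolute value
(ties broken by preferring the smaller index) and sets the other coordinates to zero.
A coordinate `i` is kept iff fewer than `k` coordinates `j` strictly precede it in the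
order "larger absolute value, ties broken by smaller index". -/
noncomputable def topK {m : ℕ} (k : ℕ) (y : EuclideanSpace ℝ (Fin m)) :
    EuclideanSpace ℝ (Fin m) :=
  WithLp.toLp 2 fun i => if (Finset.univ.filter
      (fun j => |y i| < |y j| ∨ (|y i| = |y j| ∧ j < i))).card < k then y i else 0

/-!
Let `s` be the set of coordinates kept by `topK`. Every kept coordinate dominates every dropped
one in absolute value, so summing `x_a ^ 2 ≤ x_b ^ 2` over all pairs (dropped `a`, kept `b`) gives
`#s · ‖x - topK k x‖² ≤ #sᶜ · ‖topK k x‖²`. Since at least `k` coordinates are kept, this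
rearranges to `k · ‖x‖² ≤ d · ‖topK k x‖²`, which is the claim.
-/

section Averaging

variable {ι : Type*}

theorem card_nsmul_sum_le_card_nsmul_sum {M : Type*} [AddCommMonoid M] [PartialOrder M]
    [IsOrderedAddMonoid M] {s t : Finset ι} {w : ι → M} (h : ∀ a ∈ t, ∀ b ∈ s, w a ≤ w b) :
    #s • ∑ a ∈ t, w a ≤ #t • ∑ b ∈ s, w b := by
  simp only [← sum_const]
  calc ∑ _b ∈ s, ∑ a ∈ t, w a = ∑ a ∈ t, ∑ _b ∈ s, w a := sum_comm
    _ ≤ ∑ a ∈ t, ∑ b ∈ s, w b := sum_le_sum fun a ha => sum_le_sum fun b hb => h a ha b hb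

theorem sum_compl_le_of_forall_le [Fintype ι] [DecidableEq ι] {s : Finset ι} {w : ι → ℝ}
    {k : ℕ} (hw : ∀ i, 0 ≤ w i) (hk : k ≤ #s) (h : ∀ a ∈ sᶜ, ∀ b ∈ s, w a ≤ w b) :
    ∑ a ∈ sᶜ, w a ≤ (1 - (k : ℝ) / Fintype.card ι) * ∑ a, w a := by
  set A := ∑ b ∈ s, w b
  set B := ∑ a ∈ sᶜ, w a
  have hA : 0 ≤ A := sum_nonneg fun i _ => hw i
  have hB : 0 ≤ B := sum_nonneg fun i _ => hw i
  have hcmp : (#s : ℝ) * B ≤ (Fintype.card ι - #s) * A := by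
    rw [← Nat.cast_sub (card_le_univ s), ← card_compl]
    simpa only [nsmul_eq_mul] using card_nsmul_sum_le_card_nsmul_sum h
  have hks : (k : ℝ) ≤ #s := by exact_mod_cast hk
  have hkA : (k : ℝ) * (A + B) ≤ A * Fintype.card ι := by
    linarith [mul_le_mul_of_nonneg_right hks hA, mul_le_mul_of_nonneg_right hks hB]
  have hfrac : (k : ℝ) / Fintype.card ι * (A + B) ≤ A := by
    rw [div_mul_eq_mul_div]
    exact div_le_of_le_mul₀ (Nat.cast_nonneg _) hA hkA
  rw [← sum_compl_add_sum s]
  linarith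

end Averaging

section Rank

variable {ι α : Type*} [Fintype ι] [LinearOrder α] (f : ι → α)

def rankBy (i : ι) : ℕ := #{j | f j < f i}

theorem rankBy_lt_rankBy {i j : ι} (h : f i < f j) : rankBy f i < rankBy f j := by
  refine card_lt_card ⟨fun l hl => ?_, fun hsub => ?_⟩
  · simp only [mem_filter, mem_univ, true_and] at hl ⊢
    exact hl.trans h
  · have hii := hsub (by simpa using h : i ∈ ({l | f l < f j} : Finset ι))
    simp at hii

theorem le_of_rankBy_lt_le {k : ℕ} {i j : ι} (hi : rankBy f i < k) (hj : ¬ rankBy f j < k) :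
    f i ≤ f j :=
  le_of_not_gt fun h => hj ((rankBy_lt_rankBy f h).trans hi)

theorem le_card_rankBy_lt [DecidableEq ι] {k : ℕ} (hk : k ≤ Fintype.card ι) :
    k ≤ #{i | rankBy f i < k} := by
  by_contra! hlt
  obtain ⟨i, hi, hmin⟩ := exists_min_image ({i | rankBy f i < k} : Finset ι)ᶜ f <| by
    rw [nonempty_iff_ne_empty, Ne, compl_eq_empty_iff]
    rintro huniv
    rw [huniv, card_univ] at hlt
    omega
  -- a minimal dropped element only has kept predecessors, so it would be kept itself
  have hsub : ({j | f j < f i} : Finset ι) ⊆ ({i | rankBy f i < k} : Finset ι) := by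
    intro j hj
    by_contra hj'
    exact (hmin j (mem_compl.2 hj')).not_gt (by simpa using hj)
  exact mem_compl.1 hi (mem_filter.2 ⟨mem_univ i, (card_le_card hsub).trans_lt hlt⟩)

end Rank

def absLex {m : ℕ} (y : EuclideanSpace ℝ (Fin m)) (i : Fin m) : ℝ ×ₗ Fin m :=
  toLex (-|y i|, i)

theorem topK_apply {m : ℕ} (k : ℕ) (y : EuclideanSpace ℝ (Fin m)) (i : Fin m) :
    topK k y i = if rankBy (absLex y) i < k then y i else 0 := by
  have hlt : ∀ j, absLex y j < absLex y i ↔ |y i| < |y j| ∨ (|y i| = |y j| ∧ j < i) := by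
    intro j
    simp only [absLex, Prod.Lex.toLex_lt_toLex, neg_lt_neg_iff, neg_inj, eq_comm]
  simp only [topK, rankBy, PiLp.toLp_apply, hlt]

theorem abs_le_abs_of_absLex_le {m : ℕ} {y : EuclideanSpace ℝ (Fin m)} {i j : Fin m}
    (h : absLex y i ≤ absLex y j) : |y j| ≤ |y i| :=
  neg_le_neg_iff.1 (Prod.Lex.monotone_fst _ _ h)

theorem topK_squared_error_le_general (d k : ℕ) (hkd : k ≤ d)
    (x : EuclideanSpace ℝ (Fin d)) :
    ‖x - topK k x‖ ^ 2 ≤ (1 - (k : ℝ) / d) * ‖x‖ ^ 2 := by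
  set s : Finset (Fin d) := {i | rankBy (absLex x) i < k}
  have hmem : ∀ i, i ∈ s ↔ rankBy (absLex x) i < k := by simp [s]
  have herr : ‖x - topK k x‖ ^ 2 = ∑ i ∈ sᶜ, ‖x i‖ ^ 2 := by
    rw [EuclideanSpace.norm_sq_eq, ← sum_compl_add_sum s]
    have hkept : ∑ i ∈ s, ‖(x - topK k x) i‖ ^ 2 = 0 :=
      sum_eq_zero fun i hi => by simp [topK_apply, (hmem i).1 hi]
    have hdropped : ∑ i ∈ sᶜ, ‖(x - topK k x) i‖ ^ 2 = ∑ i ∈ sᶜ, ‖x i‖ ^ 2 :=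
      sum_congr rfl fun i hi => by simp [topK_apply, (hmem i).not.1 (mem_compl.1 hi)]
    rw [hkept, hdropped, add_zero]
  have hcard : k ≤ #s := le_card_rankBy_lt (absLex x) (by rwa [Fintype.card_fin])
  have hle : ∀ a ∈ sᶜ, ∀ b ∈ s, ‖x a‖ ^ 2 ≤ ‖x b‖ ^ 2 := fun a ha b hb => by
    have hba := le_of_rankBy_lt_le (absLex x) ((hmem b).1 hb) ((hmem a).not.1 (mem_compl.1 ha))
    simpa only [Real.norm_eq_abs, sq_abs] using
      pow_le_pow_left₀ (abs_nonneg _) (abs_le_abs_of_absLex_le hba) 2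
  have := sum_compl_le_of_forall_le (fun i => sq_nonneg ‖x i‖) hcard hle
  rwa [Fintype.card_fin, ← EuclideanSpace.norm_sq_eq, ← herr] at this

/-- For every `x ∈ ℝ^d` and `1 ≤ k ≤ d`, the Top-`k` sparsification error satisfies
`‖x − TopK(x,k)‖² ≤ (1 − k/d) ‖x‖²`. -/
theorem topK_squared_error_le (d k : ℕ) (hk1 : 1 ≤ k) (hkd : k ≤ d)
    (x : EuclideanSpace ℝ (Fin d)) :
    ‖x - topK k x‖ ^ 2 ≤ (1 - (k : ℝ) / d) * ‖x‖ ^ 2 :=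
  topK_squared_error_le_general d k hkd x
end

section
/- Consider one step of LAGS-SGD at iteration t: with acc_{t+1}^{p,(l)} = ε_t^{p,(l)} + α_t G^p(v_t)^{(l)}, ε_{t+1}^{p,(l)} = acc_{t+1}^{p,(l)} − TopK(acc_{t+1}^{p,(l)}, k^{(l)}), v_{t+1}^{(l)} = v_t^{(l)} − (1/P) Σ_p TopK(acc_{t+1}^{p,(l)}, k^{(l)}), the auxiliary update x_{t+1} = x_t − α_t G(v_t) with G(v_t) = (1/P) Σ_p G^p(v_t), and v_t − x_t = (1/P) Σ_p ε_t^p. If for each layer l the aggregated Top-k error bound ‖Σ_p acc_{t+1}^{p,(l)} − Σ_p TopK(acc_{t+1}^{p,(l)}, k^{(l)})‖² ≤ (1 − k^{(l)}/d^{(l)}) ‖Σ_p acc_{t+1}^{p,(l)}‖² holds, then ‖v_{t+1} − x_{t+1}‖² ≤ (1 − 1/c_max) ‖α_t G(v_t) + (v_t − x_t)‖². -/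
/-! Both sides of the contraction are `1/P` times layer-wise quantities: `v_{t+1} - x_{t+1}` is
the averaged Top-k error `(1/P)(Σ_p acc^p - Σ_p TopK(acc^p))` and `α_t G(v_t) + (v_t - x_t)` is
the averaged accumulator `(1/P) Σ_p acc^p`. The squared `ℓ²` norm is the sum of the squared layer
norms, so it suffices to bound each layer, where the aggregated Top-k bound gives the factor
`1 - k^{(l)}/d^{(l)} ≤ 1 - 1/c_max`. -/

theorem PiLp.sum_apply {ι κ : Type*} [Fintype ι] {E : ι → Type*} [∀ i, AddCommGroup (E i)]
    (s : Finset κ) (f : κ → PiLp 2 E) (i : ι) : (∑ k ∈ s, f k) i = ∑ k ∈ s, f k i := by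
  rw [WithLp.ofLp_sum]
  exact Finset.sum_apply i s _

theorem PiLp.norm_sq_le_mul_norm_sq_of_forall {ι : Type*} [Fintype ι] {E : ι → Type*}
    [∀ i, SeminormedAddCommGroup (E i)] {c : ℝ} {u w : PiLp 2 E}
    (h : ∀ i, ‖u i‖ ^ 2 ≤ c * ‖w i‖ ^ 2) : ‖u‖ ^ 2 ≤ c * ‖w‖ ^ 2 := by
  rw [PiLp.norm_sq_eq_of_L2, PiLp.norm_sq_eq_of_L2, Finset.mul_sum]
  exact Finset.sum_le_sum fun i _ => h i

theorem norm_smul_sq_le_mul_norm_smul_sq {E : Type*} [SeminormedAddCommGroup E]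
    [NormedSpace ℝ E] (r : ℝ) {c : ℝ} {a b : E} (h : ‖a‖ ^ 2 ≤ c * ‖b‖ ^ 2) :
    ‖r • a‖ ^ 2 ≤ c * ‖r • b‖ ^ 2 :=
  calc ‖r • a‖ ^ 2 = ‖r‖ ^ 2 * ‖a‖ ^ 2 := by rw [norm_smul, mul_pow]
    _ ≤ ‖r‖ ^ 2 * (c * ‖b‖ ^ 2) := mul_le_mul_of_nonneg_left h (sq_nonneg _)
    _ = c * ‖r • b‖ ^ 2 := by rw [norm_smul, mul_pow]; ring

theorem one_sub_div_le_one_sub_one_div_of_div_le {a b c : ℝ} (ha : 0 < a) (hb : 0 < b)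
    (h : a / b ≤ c) : 1 - b / a ≤ 1 - 1 / c := by
  have := one_div_le_one_div_of_le (div_pos ha hb) h
  rw [one_div_div] at this
  linarith

theorem lags_one_step_contraction_general (L P : ℕ) (hL : 0 < L)
    (dl kl : Fin L → ℕ) (hk : ∀ l, 0 < kl l) (hkd : ∀ l, kl l ≤ dl l)
    (cmax : ℝ)
    (hcmax : cmax = Finset.univ.sup' (Finset.univ_nonempty_iff.mpr ⟨⟨0, hL⟩⟩)
      fun l => (dl l : ℝ) / kl l)
    (α : ℝ)
    -- residuals `ε_t^p`, stochastic gradients `G^p(v_t)`, iterates `v_t`, `x_t`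
    (ε G : Fin P → PiLp 2 (fun l : Fin L => EuclideanSpace ℝ (Fin (dl l))))
    (v x : PiLp 2 (fun l : Fin L => EuclideanSpace ℝ (Fin (dl l))))
    (hvx : v - x = (P : ℝ)⁻¹ • ∑ p, ε p)
    -- accumulated vectors `acc_{t+1}^p = ε_t^p + α_t G^p(v_t)`
    (acc : Fin P → PiLp 2 (fun l : Fin L => EuclideanSpace ℝ (Fin (dl l))))
    (hacc : ∀ p, acc p = ε p + α • G p)
    -- average gradient `G(v_t) = (1/P) Σ_p G^p(v_t)`
    (Gbar : PiLp 2 (fun l : Fin L => EuclideanSpace ℝ (Fin (dl l))))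
    (hGbar : Gbar = (P : ℝ)⁻¹ • ∑ p, G p)
    -- updates `v_{t+1}` and `x_{t+1}`
    (v' x' : PiLp 2 (fun l : Fin L => EuclideanSpace ℝ (Fin (dl l))))
    (hv' : ∀ l, v' l = v l - (P : ℝ)⁻¹ • ∑ p, topK (kl l) (acc p l))
    (hx' : x' = x - α • Gbar)
    -- layer-wise aggregated Top-k error bound (Assumption 1)
    (htopk : ∀ l : Fin L,
      ‖(∑ p, acc p l) - ∑ p, topK (kl l) (acc p l)‖ ^ 2
        ≤ (1 - (kl l : ℝ) / dl l) * ‖∑ p, acc p l‖ ^ 2) :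
    ‖v' - x'‖ ^ 2 ≤ (1 - 1 / cmax) * ‖α • Gbar + (v - x)‖ ^ 2 := by
  have hmean : α • Gbar + (v - x) = (P : ℝ)⁻¹ • ∑ p, acc p := by
    simp only [hGbar, hvx, hacc, Finset.sum_add_distrib, ← Finset.smul_sum, smul_add,
      smul_comm α]
    abel
  have hmean_apply (l : Fin L) : (α • Gbar + (v - x)) l = (P : ℝ)⁻¹ • ∑ p, acc p l := by
    rw [hmean, PiLp.smul_apply, PiLp.sum_apply]
  have hgap_apply (l : Fin L) : (v' - x') l
      = (P : ℝ)⁻¹ • ((∑ p, acc p l) - ∑ p, topK (kl l) (acc p l)) := by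
    rw [smul_sub, ← hmean_apply, PiLp.sub_apply, hv', hx']
    simp only [PiLp.add_apply, PiLp.sub_apply, PiLp.smul_apply]
    abel
  have hratio (l : Fin L) : 1 - (kl l : ℝ) / dl l ≤ 1 - 1 / cmax := by
    have hk' : (0 : ℝ) < kl l := by exact_mod_cast hk l
    refine one_sub_div_le_one_sub_one_div_of_div_le
      (hk'.trans_le (by exact_mod_cast hkd l)) hk' ?_
    exact hcmax ▸ Finset.le_sup' (fun l => (dl l : ℝ) / kl l) (Finset.mem_univ l)
  refine PiLp.norm_sq_le_mul_norm_sq_of_forall fun l => ?_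
  rw [hgap_apply, hmean_apply]
  exact norm_smul_sq_le_mul_norm_smul_sq _
    ((htopk l).trans (mul_le_mul_of_nonneg_right (hratio l) (sq_nonneg _)))

/-- **One step of LAGS-SGD.**  The model space `ℝ^d` is partitioned into `L` layers of
sizes `d^{(l)}` and modelled as the `ℓ²`-product `PiLp 2` of the layer spaces.
With `acc^{p,(l)} = ε_t^{p,(l)} + α_t G^p(v_t)^{(l)}`,
`ε_{t+1}^{p,(l)} = acc^{p,(l)} − TopK(acc^{p,(l)}, k^{(l)})`,
`v_{t+1}^{(l)} = v_t^{(l)} − (1/P) Σ_p TopK(acc^{p,(l)}, k^{(l)})`,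
`x_{t+1} = x_t − α_t G(v_t)` where `G(v_t) = (1/P) Σ_p G^p(v_t)` and
`v_t − x_t = (1/P) Σ_p ε_t^p`, if each layer satisfies the aggregated Top-k error bound
`‖Σ_p acc^{p,(l)} − Σ_p TopK(acc^{p,(l)}, k^{(l)})‖² ≤ (1 − k^{(l)}/d^{(l)}) ‖Σ_p acc^{p,(l)}‖²`,
then `‖v_{t+1} − x_{t+1}‖² ≤ (1 − 1/c_max) ‖α_t G(v_t) + (v_t − x_t)‖²`. -/
theorem lags_one_step_contraction (L P : ℕ) (hL : 0 < L) (hP : 0 < P)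
    (dl kl : Fin L → ℕ) (hk : ∀ l, 0 < kl l) (hkd : ∀ l, kl l ≤ dl l)
    (cmax : ℝ)
    (hcmax : cmax = Finset.univ.sup' (Finset.univ_nonempty_iff.mpr ⟨⟨0, hL⟩⟩)
      fun l => (dl l : ℝ) / kl l)
    (α : ℝ) (hα : 0 < α)
    -- residuals `ε_t^p`, stochastic gradients `G^p(v_t)`, iterates `v_t`, `x_t`
    (ε G : Fin P → PiLp 2 (fun l : Fin L => EuclideanSpace ℝ (Fin (dl l))))
    (v x : PiLp 2 (fun l : Fin L => EuclideanSpace ℝ (Fin (dl l))))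
    (hvx : v - x = (P : ℝ)⁻¹ • ∑ p, ε p)
    -- accumulated vectors `acc_{t+1}^p = ε_t^p + α_t G^p(v_t)`
    (acc : Fin P → PiLp 2 (fun l : Fin L => EuclideanSpace ℝ (Fin (dl l))))
    (hacc : ∀ p, acc p = ε p + α • G p)
    -- new residuals `ε_{t+1}^{p,(l)} = acc^{p,(l)} − TopK(acc^{p,(l)}, k^{(l)})`
    (εnext : Fin P → PiLp 2 (fun l : Fin L => EuclideanSpace ℝ (Fin (dl l))))
    (hεnext : ∀ p l, εnext p l = acc p l - topK (kl l) (acc p l))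
    -- average gradient `G(v_t) = (1/P) Σ_p G^p(v_t)`
    (Gbar : PiLp 2 (fun l : Fin L => EuclideanSpace ℝ (Fin (dl l))))
    (hGbar : Gbar = (P : ℝ)⁻¹ • ∑ p, G p)
    -- updates `v_{t+1}` and `x_{t+1}`
    (v' x' : PiLp 2 (fun l : Fin L => EuclideanSpace ℝ (Fin (dl l))))
    (hv' : ∀ l, v' l = v l - (P : ℝ)⁻¹ • ∑ p, topK (kl l) (acc p l))
    (hx' : x' = x - α • Gbar)
    -- layer-wise aggregated Top-k error bound (Assumption 1)
    (htopk : ∀ l : Fin L,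
      ‖(∑ p, acc p l) - ∑ p, topK (kl l) (acc p l)‖ ^ 2
        ≤ (1 - (kl l : ℝ) / dl l) * ‖∑ p, acc p l‖ ^ 2) :
    ‖v' - x'‖ ^ 2 ≤ (1 - 1 / cmax) * ‖α • Gbar + (v - x)‖ ^ 2 :=
  lags_one_step_contraction_general L P hL dl kl hk hkd cmax hcmax α ε G v x hvx acc hacc Gbar hGbar
    v' x' hv' hx' htopk
end

section
/- Let f : ℝ^d → ℝ be differentiable with C-Lipschitz gradient, let x, v ∈ ℝ^d, let α > 0, and let g be a square-integrable random vector in ℝ^d with E[g] = ∇f(v) and E[‖g‖²] ≤ M². Then E[f(x − α g)] ≤ f(x) − (α/2)‖∇f(x)‖² − (α/2)‖∇f(v)‖² + (α C²/2)‖x − v‖² + (α² C M²)/2. -/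
/-!
Lipschitz continuity of the gradient gives the two-sided Taylor bound
`|f y - f x - ⟪∇f x, y - x⟫| ≤ C ‖y - x‖² / 2`. Its upper half at `y = x - α g` bounds
`f (x - α g)` by `f x - α ⟪∇f x, g⟫ + C α² ‖g‖² / 2`, and both halves give `f` quadratic
growth, so `f (x - α g)` is integrable for `g ∈ L²`. Taking expectations replaces `g` by
`∇f v` in the cross term, which polarization turns into
`(‖∇f x - ∇f v‖² - ‖∇f x‖² - ‖∇f v‖²) / 2`, and `‖∇f x - ∇f v‖ ≤ C ‖x - v‖`.
-/

open MeasureTheory InnerProductSpace Set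

section LipschitzGradient

variable {F : Type*} [NormedAddCommGroup F] [InnerProductSpace ℝ F] [CompleteSpace F]
  {f : F → ℝ} {f' : F → F} {C : ℝ}

theorem HasGradientAt.neg {x d : F} (h : HasGradientAt f d x) : HasGradientAt (-f) (-d) x := by
  rw [hasGradientAt_iff_hasFDerivAt] at *
  rw [map_neg]
  exact h.neg

theorem HasGradientAt.hasDerivAt_comp_add_smul {x u d : F} {t : ℝ}
    (h : HasGradientAt f d (x + t • u)) :
    HasDerivAt (fun s : ℝ => f (x + s • u)) ⟪d, u⟫_ℝ t := by
  have hline : HasDerivAt (fun s : ℝ => x + s • u) u t := by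
    simpa using ((hasDerivAt_id t).smul_const u).const_add x
  exact (hasGradientAt_iff_hasFDerivAt.1 h).comp_hasDerivAt t hline

theorem le_add_inner_add_of_lipschitz_gradient (hf : ∀ z, HasGradientAt f (f' z) z)
    (hlip : ∀ a b, ‖f' a - f' b‖ ≤ C * ‖a - b‖) (x y : F) :
    f y ≤ f x + ⟪f' x, y - x⟫_ℝ + C / 2 * ‖y - x‖ ^ 2 := by
  obtain ⟨u, rfl⟩ : ∃ u, y = x + u := ⟨y - x, (add_sub_cancel x y).symm⟩
  rw [add_sub_cancel_left]
  -- the claim is `φ 1 ≤ φ 0`, and `φ` is antitone on `[0, ∞)`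
  let φ : ℝ → ℝ := fun t => f (x + t • u) - t * ⟪f' x, u⟫_ℝ - C / 2 * t ^ 2 * ‖u‖ ^ 2
  let φ' : ℝ → ℝ := fun t => ⟪f' (x + t • u), u⟫_ℝ - ⟪f' x, u⟫_ℝ - C * t * ‖u‖ ^ 2
  have hφ : ∀ t, HasDerivAt φ (φ' t) t := fun t => by
    refine ((((hf (x + t • u)).hasDerivAt_comp_add_smul.sub ((hasDerivAt_id t).mul_const
      ⟪f' x, u⟫_ℝ)).sub (((hasDerivAt_pow 2 t).const_mul (C / 2)).mul_const
      (‖u‖ ^ 2))).congr_deriv ?_)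
    simp only [φ']
    ring
  have hφ'_nonpos : ∀ t ∈ interior (Ici (0 : ℝ)), φ' t ≤ 0 := fun t ht => by
    rw [interior_Ici] at ht
    have hcs : ⟪f' (x + t • u) - f' x, u⟫_ℝ ≤ C * t * ‖u‖ ^ 2 := calc
      _ ≤ ‖f' (x + t • u) - f' x‖ * ‖u‖ := real_inner_le_norm _ _
      _ ≤ C * ‖t • u‖ * ‖u‖ := by gcongr; simpa using hlip (x + t • u) x
      _ = C * t * ‖u‖ ^ 2 := by rw [norm_smul, Real.norm_of_nonneg ht.le]; ring
    simp only [φ', ← inner_sub_left]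
    linarith
  have hanti : AntitoneOn φ (Ici 0) :=
    antitoneOn_of_hasDerivWithinAt_nonpos (convex_Ici 0)
      (fun t _ => (hφ t).continuousAt.continuousWithinAt)
      (fun t _ => (hφ t).hasDerivWithinAt) hφ'_nonpos
  have := hanti self_mem_Ici (zero_le_one' ℝ) zero_le_one
  simp only [φ, zero_smul, add_zero, one_smul, zero_mul, sub_zero, one_pow, mul_one] at this
  linarith

theorem abs_sub_sub_inner_le_of_lipschitz_gradient (hf : ∀ z, HasGradientAt f (f' z) z)
    (hlip : ∀ a b, ‖f' a - f' b‖ ≤ C * ‖a - b‖) (x y : F) :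
    |f y - f x - ⟪f' x, y - x⟫_ℝ| ≤ C / 2 * ‖y - x‖ ^ 2 := by
  have hupper := le_add_inner_add_of_lipschitz_gradient hf hlip x y
  have hlower := le_add_inner_add_of_lipschitz_gradient (f := -f) (f' := -f')
    (fun z => (hf z).neg)
    (fun a b => by
      rw [Pi.neg_apply, Pi.neg_apply, neg_sub_neg, norm_sub_rev]; exact hlip a b)
    x y
  simp only [Pi.neg_apply, inner_neg_left] at hlower
  rw [abs_le]
  constructor <;> linarith

theorem integrable_comp_of_lipschitz_gradient {Ω : Type*} [MeasurableSpace Ω]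
    {μ : Measure Ω} [IsFiniteMeasure μ] (hf : ∀ z, HasGradientAt f (f' z) z)
    (hlip : ∀ a b, ‖f' a - f' b‖ ≤ C * ‖a - b‖) {Y : Ω → F} (hY : MemLp Y 2 μ) :
    Integrable (fun ω => f (Y ω)) μ := by
  have hgrowth : ∀ y, ‖f y‖ ≤ |f 0| + ‖f' 0‖ * ‖y‖ + C / 2 * ‖y‖ ^ 2 := fun y => by
    have htaylor := abs_sub_sub_inner_le_of_lipschitz_gradient hf hlip 0 y
    rw [sub_zero] at htaylor
    calc ‖f y‖ = |(f y - f 0 - ⟪f' 0, y⟫_ℝ) + f 0 + ⟪f' 0, y⟫_ℝ| := by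
          rw [Real.norm_eq_abs]; ring_nf
      _ ≤ |f y - f 0 - ⟪f' 0, y⟫_ℝ| + |f 0| + |⟪f' 0, y⟫_ℝ| := abs_add_three _ _ _
      _ ≤ _ := by linarith [abs_real_inner_le_norm (f' 0) y]
  have hf_cont : Continuous f := continuous_iff_continuousAt.2 fun z => (hf z).continuousAt
  refine Integrable.mono' ?_ (hf_cont.comp_aestronglyMeasurable hY.aestronglyMeasurable)
    (ae_of_all _ fun ω => hgrowth (Y ω))
  exact ((integrable_const _).add ((hY.integrable one_le_two).norm.const_mul _)).add
    ((hY.integrable_norm_pow two_ne_zero).const_mul _)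

theorem integral_comp_sub_smul_le_of_lipschitz_gradient {Ω : Type*} [MeasurableSpace Ω]
    {μ : Measure Ω} [IsProbabilityMeasure μ] (hf : ∀ z, HasGradientAt f (f' z) z)
    (hlip : ∀ a b, ‖f' a - f' b‖ ≤ C * ‖a - b‖) {g : Ω → F} (hg : MemLp g 2 μ) (x : F) (α : ℝ) :
    ∫ ω, f (x - α • g ω) ∂μ
      ≤ f x - α * ⟪f' x, ∫ ω, g ω ∂μ⟫_ℝ + C * α ^ 2 / 2 * ∫ ω, ‖g ω‖ ^ 2 ∂μ := by
  have hg_int : Integrable g μ := hg.integrable one_le_two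
  have hg_sq_int : Integrable (fun ω => ‖g ω‖ ^ 2) μ := hg.integrable_norm_pow two_ne_zero
  have hpointwise : ∀ ω, f (x - α • g ω)
      ≤ f x - α * ⟪f' x, g ω⟫_ℝ + C * α ^ 2 / 2 * ‖g ω‖ ^ 2 := fun ω => by
    have h := le_add_inner_add_of_lipschitz_gradient hf hlip x (x - α • g ω)
    rw [sub_sub_cancel_left, inner_neg_right, inner_smul_right, norm_neg, norm_smul,
      mul_pow, Real.norm_eq_abs, sq_abs] at h
    linarith
  have hlinear_int : Integrable (fun ω => f x - α * ⟪f' x, g ω⟫_ℝ) μ :=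
    (integrable_const _).sub ((hg_int.const_inner _).const_mul α)
  calc ∫ ω, f (x - α • g ω) ∂μ
      ≤ ∫ ω, (f x - α * ⟪f' x, g ω⟫_ℝ + C * α ^ 2 / 2 * ‖g ω‖ ^ 2) ∂μ :=
        integral_mono (integrable_comp_of_lipschitz_gradient hf hlip
          ((memLp_const x).sub (hg.const_smul α)))
          (hlinear_int.add (hg_sq_int.const_mul _)) hpointwise
    _ = f x - α * ⟪f' x, ∫ ω, g ω ∂μ⟫_ℝ + C * α ^ 2 / 2 * ∫ ω, ‖g ω‖ ^ 2 ∂μ := by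
        rw [integral_add hlinear_int (hg_sq_int.const_mul _), integral_sub (integrable_const _)
          ((hg_int.const_inner _).const_mul α), integral_const_mul, integral_const_mul,
          integral_inner hg_int, integral_const, probReal_univ, one_smul]

end LipschitzGradient

/-- **Single-step expected descent inequality.**  Let `f : ℝ^d → ℝ` be differentiable
with `C`-Lipschitz gradient, let `x, v ∈ ℝ^d`, `α > 0`, and let `g` be a
square-integrable random vector with `E[g] = ∇f(v)` and `E[‖g‖²] ≤ M²`.  Then
`E[f(x − α g)] ≤ f(x) − (α/2)‖∇f(x)‖² − (α/2)‖∇f(v)‖² + (α C²/2)‖x − v‖² + α² C M²/2`. -/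
theorem expected_descent_step {d : ℕ}
    (f : EuclideanSpace ℝ (Fin d) → ℝ) (C : ℝ) (hC : 0 < C)
    (hdiff : Differentiable ℝ f)
    (hlip : ∀ a b : EuclideanSpace ℝ (Fin d),
      ‖gradient f a - gradient f b‖ ≤ C * ‖a - b‖)
    (x v : EuclideanSpace ℝ (Fin d)) (α : ℝ) (hα : 0 < α)
    {Ω : Type*} [MeasurableSpace Ω] (μ : Measure Ω) [IsProbabilityMeasure μ]
    (g : Ω → EuclideanSpace ℝ (Fin d))
    (hg2 : MemLp g 2 μ)
    (hmean : ∫ ω, g ω ∂μ = gradient f v)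
    (M : ℝ) (hM : ∫ ω, ‖g ω‖ ^ 2 ∂μ ≤ M ^ 2) :
    ∫ ω, f (x - α • g ω) ∂μ
      ≤ f x - (α / 2) * ‖gradient f x‖ ^ 2 - (α / 2) * ‖gradient f v‖ ^ 2
        + (α * C ^ 2 / 2) * ‖x - v‖ ^ 2 + α ^ 2 * C * M ^ 2 / 2 := by
  have hstep := integral_comp_sub_smul_le_of_lipschitz_gradient
    (fun z => (hdiff z).hasGradientAt) hlip hg2 x α
  rw [hmean] at hstep
  have hnoise : C * α ^ 2 / 2 * ∫ ω, ‖g ω‖ ^ 2 ∂μ ≤ C * α ^ 2 / 2 * M ^ 2 := by gcongr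
  have hpolar := norm_sub_sq_real (gradient f x) (gradient f v)
  have hlip_sq : ‖gradient f x - gradient f v‖ ^ 2 ≤ C ^ 2 * ‖x - v‖ ^ 2 := by
    rw [← mul_pow]
    exact pow_le_pow_left₀ (norm_nonneg _) (hlip x v) 2
  nlinarith [mul_le_mul_of_nonneg_left hlip_sq hα.le]
end
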